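/- Consider ℤ^{d+1} = ℤ^d × ℤ with halves ℤ^{d+1}_± = ℤ^d × (±ℕ₊), boundary Γ = ℤ^d × {0} and normal N = e_{d+1}. For n_i, n_o ∈ ℕ, consider n_i admissible incoming leads γ_j and n_o admissible outgoing leads ρ_k lying in Γ with tangents in the tangential directions TΓ, which pairwise do not cross tangentially. Let ℙ be the adapted projection with symbol P(x) = 1 on ℤ^{d+1}_+, P(x) = 0 on ℤ^{d+1}_−, and P(x) = |−N⟩⟨−N| on Γ, and let ℙ_L := ∑_j ℙ_{γ_j} + ∑_k ℙ_{ρ_k} be the total projection on the quantum leads. Let ℂ be any coin that is reflecting on Γ (C(x)|±N⟩ = |∓N⟩ for all x ∈ Γ) and satisfies |⟨τ_α(t+1), C(α(t)) τ_α(t)⟩| = 1 along every lead α. Then, for Q := ℙ + ℙ_L and Φ := U*QU − Q, one has ind(Φ) = dim ker(Φ − 1) − dim ker(Φ + 1) = n_o − n_i; moreover U maps every vector supported in ℤ^{d+1}_± into a vector supported in ℤ^{d+1}_± ∪ Γ, each Ran P_{ρ_k}(1) is a wandering subspace for U, and each Ran P_{γ_j}(−1) is a wandering subspace for U*. -/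

import Mathlib

open ContinuousLinearMap

noncomputable section

/-- Sites of the lattice `ℤ^{d+1}`. -/
abbrev Site (d : ℕ) := Fin (d + 1) → ℤ

/-- The coin space `ℂ^{2(d+1)}`. -/
abbrev CoinSp (d : ℕ) := EuclideanSpace ℂ (Fin (2 * (d + 1)))

/-- The Hilbert space `ℓ²(ℤ^{d+1}; ℂ^{2(d+1)})`. -/
abbrev QWH (d : ℕ) := lp (fun _ : Site d => CoinSp d) 2

/-- The lattice vector of the `i`-th quantum direction. -/
def dirVec (d : ℕ) (i : Fin (2 * (d + 1))) : Site d :=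
  fun j => if (j : ℕ) = (i : ℕ) / 2 then (if (i : ℕ) % 2 = 0 then 1 else -1) else 0

/-- The coin-space basis vector `|τ⟩` of the `i`-th direction. -/
def coinVec (d : ℕ) (i : Fin (2 * (d + 1))) : CoinSp d := EuclideanSpace.single i 1

/-- The rank-one projection `P_τ = |τ⟩⟨τ|`. -/
def Pdir (d : ℕ) (i : Fin (2 * (d + 1))) : CoinSp d →L[ℂ] CoinSp d :=
  (innerSL ℂ (coinVec d i)).smulRight (coinVec d i)

/-- The index of the inward normal direction `|+N⟩ = |+e_{d+1}⟩`. -/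
def idxPN (d : ℕ) : Fin (2 * (d + 1)) := ⟨2 * d, by omega⟩

/-- The index of the outward normal direction `|−N⟩ = |−e_{d+1}⟩`. -/
def idxMN (d : ℕ) : Fin (2 * (d + 1)) := ⟨2 * d + 1, by omega⟩

/-- The last (normal) coordinate of a site of `ℤ^{d+1} = ℤ^d × ℤ`. -/
def lastCoord (d : ℕ) (x : Site d) : ℤ := x (Fin.last d)

/-- The symbol of the bulk projection: `1` on `ℤ^{d+1}_+`, `0` on `ℤ^{d+1}_−` and
`|−N⟩⟨−N|` on the boundary `Γ = ℤ^d × {0}`. -/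
def bulkSym (d : ℕ) (x : Site d) : CoinSp d →L[ℂ] CoinSp d :=
  if 0 < lastCoord d x then 1 else if lastCoord d x < 0 then 0 else Pdir d (idxMN d)

/-- The vector `|x₀, τ₀⟩ ∈ ℓ²(ℤ^{d+1}; ℂ^{2(d+1)})`, i.e. `x ↦ δ_{x,x₀} |τ₀⟩`. -/
def leadVec (d : ℕ) (x : Site d) (i : Fin (2 * (d + 1))) : QWH d :=
  lp.single 2 x (coinVec d i)

/-- The rank-one projection onto `|x₀, τ₀⟩`. -/
def leadProj (d : ℕ) (x : Site d) (i : Fin (2 * (d + 1))) : QWH d →L[ℂ] QWH d :=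
  (innerSL ℂ (leadVec d x i)).smulRight (leadVec d x i)

/-!
The bulk projection `ℙ` commutes with the walk: off `Γ` its symbol is `0` or `1` on whole half
spaces, and on `Γ` the reflecting coin turns the component `|−N⟩` kept by `ℙ` into the component
`|+N⟩` that `ℙ` keeps one step above `Γ`. Along a conducting lead, `U` maps `|α(t), τ_α(t)⟩` to a
unimodular multiple of `|α(t+1), τ_α(t+1)⟩`, so conjugation by `U` shifts a lead projection by one
step: `U*ℙ_ρU = ℙ_ρ + |U*ρ(1)⟩⟨U*ρ(1)|` and `U*ℙ_γU = ℙ_γ − |γ(−1)⟩⟨γ(−1)|`. Hence `Φ = P_K − P_L`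
for the spans `K`, `L` of `n_o`, resp. `n_i`, orthonormal vectors. For two orthogonal projections
`ker(P_K − P_L − 1) = K ⊓ Lᗮ` and `ker(P_K − P_L + 1) = L ⊓ Kᗮ`, and `P_L` restricted to `K` shows
`dim (K ⊓ Lᗮ) − dim (L ⊓ Kᗮ) = dim K − dim L`. The same shift, together with admissibility of the
leads, makes the first site of an outgoing lead wandering for `U` and the last site of an incoming
lead wandering for `U*`.
-/

open Module InnerProductSpace

section Reindex

variable {M : Type*} [AddCommMonoid M] [TopologicalSpace M]

theorem hasSum_subtype_one_le_iff {f : ℕ → M} {a : M} :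
    HasSum (fun t : {t : ℕ // 1 ≤ t} => f t) a ↔ HasSum (fun n => f (n + 1)) a := by
  let e : ℕ ≃ {t : ℕ // 1 ≤ t} :=
    { toFun := fun n => ⟨n + 1, by omega⟩
      invFun := fun t => t.1 - 1
      left_inv := fun n => by simp
      right_inv := fun t => Subtype.ext (by have := t.2; simp; omega) }
  exact (e.hasSum_iff (f := fun t => f t.1)).symm

theorem hasSum_subtype_le_neg_one_iff {f : ℤ → M} {a : M} :
    HasSum (fun t : {t : ℤ // t ≤ -1} => f t) a ↔ HasSum (fun n : ℕ => f (-1 - n)) a := by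
  let e : ℕ ≃ {t : ℤ // t ≤ -1} :=
    { toFun := fun n => ⟨-1 - n, by omega⟩
      invFun := fun t => (-1 - t.1).toNat
      left_inv := fun n => by simp
      right_inv := fun t => Subtype.ext (by have := t.2; simp; omega) }
  exact (e.hasSum_iff (f := fun t => f t.1)).symm

end Reindex

section InnerProductSpace

variable {𝕜 E : Type*} [RCLike 𝕜] [NormedAddCommGroup E] [InnerProductSpace 𝕜 E]

namespace Submodule

theorem starProjection_sub_starProjection_apply_eq_self_iff (K L : Submodule 𝕜 E)
    [K.HasOrthogonalProjection] [L.HasOrthogonalProjection] {x : E} :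
    K.starProjection x - L.starProjection x = x ↔ x ∈ K ⊓ Lᗮ := by
  refine ⟨fun h => ?_, fun ⟨hK, hL⟩ => ?_⟩
  · set a := K.starProjection x
    set b := L.starProjection x
    have ha : a ∈ K := K.starProjection_apply_mem x
    have hb : b ∈ L := L.starProjection_apply_mem x
    have hKb : K.starProjection b = 0 := by
      have := congrArg K.starProjection h
      rwa [map_sub, starProjection_eq_self_iff.mpr ha, sub_eq_self] at this
    have hLa : L.starProjection a = (2 : 𝕜) • b := by
      have := congrArg L.starProjection h
      rw [map_sub, starProjection_eq_self_iff.mpr hb, sub_eq_iff_eq_add] at this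
      rw [this, two_smul]
    -- `⟪a, b⟫` vanishes since `b ⟂ K`, and equals `2 ‖b‖²` since `P_L a = 2 b`
    have hb0 : b = 0 := by
      have hab : inner 𝕜 a b = 0 := by
        rw [← starProjection_eq_self_iff.mpr ha, inner_starProjection_left_eq_right, hKb,
          inner_zero_right]
      have : inner 𝕜 a b = (2 : 𝕜) * inner 𝕜 b b := by
        conv_lhs => rw [← starProjection_eq_self_iff.mpr hb]
        rw [← inner_starProjection_left_eq_right, hLa, inner_smul_left, map_ofNat]
      rw [hab, eq_comm, mul_eq_zero, inner_self_eq_zero] at this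
      exact this.resolve_left two_ne_zero
    rw [hb0, sub_zero] at h
    exact ⟨h ▸ ha, (starProjection_apply_eq_zero_iff L).mp hb0⟩
  · rw [starProjection_eq_self_iff.mpr hK, (starProjection_apply_eq_zero_iff L).mpr hL, sub_zero]

theorem ker_starProjection_sub_starProjection_sub_one (K L : Submodule 𝕜 E)
    [K.HasOrthogonalProjection] [L.HasOrthogonalProjection] :
    LinearMap.ker ((K.starProjection - L.starProjection - 1 : E →L[𝕜] E) : E →ₗ[𝕜] E) =
      K ⊓ Lᗮ := by
  ext x
  simp [sub_eq_zero, starProjection_sub_starProjection_apply_eq_self_iff]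

theorem ker_starProjection_sub_starProjection_add_one (K L : Submodule 𝕜 E)
    [K.HasOrthogonalProjection] [L.HasOrthogonalProjection] :
    LinearMap.ker ((K.starProjection - L.starProjection + 1 : E →L[𝕜] E) : E →ₗ[𝕜] E) =
      L ⊓ Kᗮ := by
  ext x
  rw [LinearMap.mem_ker, ← starProjection_sub_starProjection_apply_eq_self_iff]
  simp only [coe_coe, add_apply, sub_apply, one_apply_eq_self]
  rw [← sub_eq_zero (a := _ - _)]
  constructor <;> intro h <;> rw [← neg_eq_zero, ← h] <;> abel

theorem finrank_inf_orthogonal_add_finrank (K L : Submodule 𝕜 E)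
    [FiniteDimensional 𝕜 K] [FiniteDimensional 𝕜 L] :
    finrank 𝕜 ↥(K ⊓ Lᗮ) + finrank 𝕜 L = finrank 𝕜 ↥(L ⊓ Kᗮ) + finrank 𝕜 K := by
  set f := (L.starProjection : E →ₗ[𝕜] E).domRestrict K
  have hrange : LinearMap.range f ≤ L := by
    rintro _ ⟨x, rfl⟩
    exact L.starProjection_apply_mem x
  -- `⟪P_L x, y⟫ = ⟪x, y⟫` for `y ∈ L`
  have horth : (LinearMap.range f)ᗮ ⊓ L = L ⊓ Kᗮ := by
    ext y
    rw [mem_inf, mem_inf, and_comm]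
    refine and_congr_right fun hy => ⟨fun h x hx => ?_, fun h => ?_⟩
    · have := h (f ⟨x, hx⟩) (LinearMap.mem_range_self f _)
      rwa [LinearMap.domRestrict_apply, coe_coe, inner_starProjection_left_eq_right,
        starProjection_eq_self_iff.mpr hy] at this
    · rintro _ ⟨x, rfl⟩
      rw [LinearMap.domRestrict_apply, coe_coe, inner_starProjection_left_eq_right,
        starProjection_eq_self_iff.mpr hy]
      exact h x x.2
  have hker : finrank 𝕜 (LinearMap.ker f) = finrank 𝕜 ↥(K ⊓ Lᗮ) := by
    rw [LinearMap.ker_domRestrict, ← finrank_map_subtype_eq, map_comap_subtype,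
      show LinearMap.ker (L.starProjection : E →ₗ[𝕜] E) = Lᗮ from L.ker_starProjection]
  have := LinearMap.finrank_range_add_finrank_ker f
  have := finrank_add_inf_finrank_orthogonal hrange
  rw [horth] at this
  omega

end Submodule

theorem Orthonormal.starProjection_span_range {ι : Type*} [Fintype ι] {v : ι → E}
    (hv : Orthonormal 𝕜 v) [(Submodule.span 𝕜 (Set.range v)).HasOrthogonalProjection] :
    (Submodule.span 𝕜 (Set.range v)).starProjection = ∑ i, rankOne 𝕜 (v i) (v i) := by
  let b : OrthonormalBasis ι 𝕜 (Submodule.span 𝕜 (Set.range v)) :=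
    (Module.Basis.span hv.linearIndependent).toOrthonormalBasis (by
      rw [funext (Module.Basis.span_apply hv.linearIndependent)]
      exact orthonormal_span hv)
  rw [b.starProjection_eq_sum_rankOne]
  simp [b, Module.Basis.span_apply]

theorem Orthonormal.index_sum_rankOne_sub_sum_rankOne {m n : ℕ} {u : Fin m → E} {v : Fin n → E}
    (hu : Orthonormal 𝕜 u) (hv : Orthonormal 𝕜 v) {Φ : E →L[𝕜] E}
    (hΦ : Φ = ∑ k, rankOne 𝕜 (u k) (u k) - ∑ j, rankOne 𝕜 (v j) (v j)) :
    FiniteDimensional 𝕜 (LinearMap.ker ((Φ - 1 : E →L[𝕜] E) : E →ₗ[𝕜] E)) ∧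
    FiniteDimensional 𝕜 (LinearMap.ker ((Φ + 1 : E →L[𝕜] E) : E →ₗ[𝕜] E)) ∧
    (finrank 𝕜 (LinearMap.ker ((Φ - 1 : E →L[𝕜] E) : E →ₗ[𝕜] E)) : ℤ)
      - (finrank 𝕜 (LinearMap.ker ((Φ + 1 : E →L[𝕜] E) : E →ₗ[𝕜] E)) : ℤ) = (m : ℤ) - n := by
  have := FiniteDimensional.span_of_finite 𝕜 (Set.finite_range u)
  have := FiniteDimensional.span_of_finite 𝕜 (Set.finite_range v)
  rw [← hu.starProjection_span_range, ← hv.starProjection_span_range] at hΦ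
  subst hΦ
  rw [Submodule.ker_starProjection_sub_starProjection_sub_one,
    Submodule.ker_starProjection_sub_starProjection_add_one]
  refine ⟨inferInstance, inferInstance, ?_⟩
  have hK := finrank_span_eq_card hu.linearIndependent
  have hL := finrank_span_eq_card hv.linearIndependent
  have := Submodule.finrank_inf_orthogonal_add_finrank (Submodule.span 𝕜 (Set.range u))
    (Submodule.span 𝕜 (Set.range v))
  simp only [Fintype.card_fin] at hK hL
  omega

theorem InnerProductSpace.rankOne_smul_smul_self {c : 𝕜} (hc : ‖c‖ = 1) (x : E) :
    rankOne 𝕜 (c • x) (c • x) = rankOne 𝕜 x x := by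
  ext y
  rw [rankOne_apply, rankOne_apply, inner_smul_left, smul_smul, mul_comm, ← mul_assoc,
    RCLike.mul_conj, hc]
  simp

theorem eq_inner_smul_of_norm_inner_eq_one {e w : E} (he : ‖e‖ = 1) (hw : ‖w‖ = 1)
    (h : ‖inner 𝕜 e w‖ = 1) : w = inner 𝕜 e w • e := by
  obtain ⟨r, -, rfl⟩ := (norm_inner_eq_norm_iff (𝕜 := 𝕜) (x := e) (y := w)
    (norm_ne_zero_iff.mp (by simp [he])) (norm_ne_zero_iff.mp (by simp [hw]))).mp
    (by rw [h, he, hw, one_mul])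
  rw [inner_smul_right, inner_self_eq_norm_sq_to_K, he]
  simp

def IsWandering (V : E →L[𝕜] E) (L : Submodule 𝕜 E) : Prop :=
  ∀ x ∈ L, ∀ y ∈ L, ∀ m : ℕ, 1 ≤ m → inner 𝕜 ((V ^ m) x) y = 0

theorem isWandering_range_rankOne {V : E →L[𝕜] E} {w : ℕ → E}
    (hstep : ∀ n, ∃ c : 𝕜, V (w n) = c • w (n + 1))
    (horth : ∀ m, 1 ≤ m → inner 𝕜 (w m) (w 0) = 0) :
    IsWandering V (LinearMap.range ((rankOne 𝕜 (w 0) (w 0) : E →L[𝕜] E) : E →ₗ[𝕜] E)) := by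
  have hpow (m : ℕ) : ∃ c : 𝕜, (V ^ m) (w 0) = c • w m := by
    induction m with
    | zero => exact ⟨1, by simp⟩
    | succ m ih =>
      obtain ⟨c, hc⟩ := ih
      obtain ⟨c', hc'⟩ := hstep m
      exact ⟨c * c', by rw [pow_succ', mul_apply_eq_comp, hc, map_smul, hc', smul_smul]⟩
  rintro _ ⟨φ, rfl⟩ _ ⟨χ, rfl⟩ m hm
  obtain ⟨c, hc⟩ := hpow m
  simp [rankOne_apply, map_smul, hc, inner_smul_left, inner_smul_right, horth m hm]

variable [CompleteSpace E] {U : E →L[𝕜] E}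

theorem Orthonormal.adjoint_comp (hU : U * adjoint U = 1) {ι : Type*} {v : ι → E}
    (hv : Orthonormal 𝕜 v) : Orthonormal 𝕜 fun i => adjoint U (v i) := by
  classical
  rw [orthonormal_iff_ite] at hv ⊢
  intro i j
  rw [adjoint_inner_left, ← mul_apply_eq_comp, hU, one_apply_eq_self, hv]

namespace ContinuousLinearMap

theorem adjoint_apply_eq_conj_smul (hU : adjoint U * U = 1) {x y : E} {c : 𝕜} (hc : ‖c‖ = 1)
    (h : U x = c • y) : adjoint U y = starRingEnd 𝕜 c • x := by
  have hx : x = c • adjoint U y := by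
    rw [← map_smul, ← h, ← mul_apply_eq_comp, hU, one_apply_eq_self]
  rw [hx, smul_smul, RCLike.conj_mul, hc]
  simp

variable (U) in
theorem hasSum_rankOne_adjoint {ι : Type*} {w : ι → E} {P : E →L[𝕜] E}
    (hP : ∀ ψ, HasSum (fun i => rankOne 𝕜 (w i) (w i) ψ) (P ψ)) (ψ : E) :
    HasSum (fun i => rankOne 𝕜 (adjoint U (w i)) (adjoint U (w i)) ψ) (adjoint U (P (U ψ))) := by
  convert (hP (U ψ)).mapL (adjoint U) using 2 with i
  simp [adjoint_inner_left]

theorem adjoint_mul_mul_eq_add_rankOne (hU : adjoint U * U = 1) {w : ℕ → E}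
    (hstep : ∀ n, ∃ c : 𝕜, ‖c‖ = 1 ∧ U (w n) = c • w (n + 1)) {P : E →L[𝕜] E}
    (hP : ∀ ψ, HasSum (fun n => rankOne 𝕜 (w n) (w n) ψ) (P ψ)) (ψ : E) :
    adjoint U (P (U ψ)) = P ψ + rankOne 𝕜 (adjoint U (w 0)) (adjoint U (w 0)) ψ := by
  have hshift (n : ℕ) :
      rankOne 𝕜 (adjoint U (w (n + 1))) (adjoint U (w (n + 1))) = rankOne 𝕜 (w n) (w n) := by
    obtain ⟨c, hc, h⟩ := hstep n
    rw [adjoint_apply_eq_conj_smul hU hc h, rankOne_smul_smul_self (by simpa using hc)]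
  have h := (hasSum_nat_add_iff' 1).mpr (hasSum_rankOne_adjoint U hP ψ)
  simp only [hshift, Finset.range_one, Finset.sum_singleton] at h
  rw [(hP ψ).unique h]
  abel

theorem adjoint_mul_mul_eq_sub_rankOne (hU : adjoint U * U = 1) {w : ℕ → E}
    (hstep : ∀ n, ∃ c : 𝕜, ‖c‖ = 1 ∧ U (w (n + 1)) = c • w n) {P : E →L[𝕜] E}
    (hP : ∀ ψ, HasSum (fun n => rankOne 𝕜 (w n) (w n) ψ) (P ψ)) (ψ : E) :
    adjoint U (P (U ψ)) = P ψ - rankOne 𝕜 (w 0) (w 0) ψ := by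
  have hshift (n : ℕ) :
      rankOne 𝕜 (adjoint U (w n)) (adjoint U (w n)) = rankOne 𝕜 (w (n + 1)) (w (n + 1)) := by
    obtain ⟨c, hc, h⟩ := hstep n
    rw [adjoint_apply_eq_conj_smul hU hc h, rankOne_smul_smul_self (by simpa using hc)]
  have h := (hasSum_nat_add_iff' 1).mpr (hP ψ)
  simp only [Finset.range_one, Finset.sum_singleton] at h
  refine (hasSum_rankOne_adjoint U hP ψ).unique ?_
  simpa only [hshift] using h

theorem adjoint_mul_mul_sub_eq_of_leads (hU : adjoint U * U = 1) {P₀ : E →L[𝕜] E}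
    (hP₀ : ∀ ψ, P₀ (U ψ) = U (P₀ ψ)) {ni no : ℕ} {wi : Fin ni → ℕ → E} {wo : Fin no → ℕ → E}
    (hwi : ∀ j n, ∃ c : 𝕜, ‖c‖ = 1 ∧ U (wi j (n + 1)) = c • wi j n)
    (hwo : ∀ k n, ∃ c : 𝕜, ‖c‖ = 1 ∧ U (wo k n) = c • wo k (n + 1))
    {Pi : Fin ni → E →L[𝕜] E} {Po : Fin no → E →L[𝕜] E}
    (hPi : ∀ j ψ, HasSum (fun n => rankOne 𝕜 (wi j n) (wi j n) ψ) (Pi j ψ))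
    (hPo : ∀ k ψ, HasSum (fun n => rankOne 𝕜 (wo k n) (wo k n) ψ) (Po k ψ))
    {Q : E →L[𝕜] E} (hQ : Q = P₀ + (∑ j, Pi j + ∑ k, Po k)) :
    adjoint U * Q * U - Q = ∑ k, rankOne 𝕜 (adjoint U (wo k 0)) (adjoint U (wo k 0)) -
      ∑ j, rankOne 𝕜 (wi j 0) (wi j 0) := by
  ext ψ
  subst hQ
  simp only [sub_apply, mul_apply_eq_comp, add_apply, sum_apply, map_add, map_sum]
  rw [hP₀, ← mul_apply_eq_comp, hU, one_apply_eq_self,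
    Finset.sum_congr rfl fun j _ => adjoint_mul_mul_eq_sub_rankOne hU (hwi j) (hPi j) ψ,
    Finset.sum_congr rfl fun k _ => adjoint_mul_mul_eq_add_rankOne hU (hwo k) (hPo k) ψ,
    Finset.sum_sub_distrib, Finset.sum_add_distrib]
  abel

end ContinuousLinearMap

end InnerProductSpace

section Walk

variable {d : ℕ} {C : Site d → (CoinSp d →L[ℂ] CoinSp d)} {U : QWH d →L[ℂ] QWH d}

/-- `U = T ∘ ℂ`: the coin acts at `x − e_i`, then the conditional shift moves the `i`-th
component along `e_i`. -/
def IsQuantumWalk (C : Site d → (CoinSp d →L[ℂ] CoinSp d)) (U : QWH d →L[ℂ] QWH d) : Prop :=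
  ∀ (ψ : QWH d) (x : Site d) (i : Fin (2 * (d + 1))),
    (U ψ) x i = (C (x - dirVec d i) (ψ (x - dirVec d i))) i

theorem lastCoord_sub (x y : Site d) : lastCoord d (x - y) = lastCoord d x - lastCoord d y := rfl

theorem lastCoord_add (x y : Site d) : lastCoord d (x + y) = lastCoord d x + lastCoord d y := rfl

theorem lastCoord_dirVec_cases (i : Fin (2 * (d + 1))) :
    ((i : ℕ) < 2 * d ∧ lastCoord d (dirVec d i) = 0) ∨
      (i = idxPN d ∧ lastCoord d (dirVec d i) = 1) ∨
      (i = idxMN d ∧ lastCoord d (dirVec d i) = -1) := by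
  simp only [lastCoord, dirVec, Fin.val_last, idxPN, idxMN, Fin.ext_iff]
  omega

theorem lastCoord_dirVec_mem (i : Fin (2 * (d + 1))) :
    -1 ≤ lastCoord d (dirVec d i) ∧ lastCoord d (dirVec d i) ≤ 1 := by
  rcases lastCoord_dirVec_cases i with ⟨-, h⟩ | ⟨-, h⟩ | ⟨-, h⟩ <;> omega

theorem coinVec_apply (i j : Fin (2 * (d + 1))) :
    coinVec d i j = if j = i then 1 else 0 := PiLp.single_apply 2 ℂ i 1 j

theorem inner_coinVec_left (i : Fin (2 * (d + 1))) (v : CoinSp d) :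
    inner ℂ (coinVec d i) v = v i := by
  simp [coinVec, EuclideanSpace.inner_single_left]

theorem bulkSym_apply (x : Site d) (v : CoinSp d) (i : Fin (2 * (d + 1))) :
    bulkSym d x v i = if 0 < lastCoord d x ∨ (lastCoord d x = 0 ∧ i = idxMN d) then v i else 0 := by
  rcases lt_trichotomy (lastCoord d x) 0 with h | h | h
  · simp [bulkSym, h, h.ne, not_lt.mpr h.le]
  · by_cases hi : i = idxMN d <;> simp [bulkSym, h, hi, Pdir, inner_coinVec_left, coinVec_apply]
  · simp [bulkSym, h]

theorem coin_apply_idxPN {A : CoinSp d →L[ℂ] CoinSp d} (hA : adjoint A * A = 1)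
    (hrefl : A (coinVec d (idxMN d)) = coinVec d (idxPN d)) (v : CoinSp d) :
    A v (idxPN d) = v (idxMN d) := by
  rw [← inner_coinVec_left, ← hrefl, ← adjoint_inner_right, ← mul_apply_eq_comp, hA,
    one_apply_eq_self, inner_coinVec_left]

theorem bulkSym_add_dirVec_apply {A : CoinSp d →L[ℂ] CoinSp d} (hA : adjoint A * A = 1)
    {x : Site d} (hrefl : lastCoord d x = 0 → A (coinVec d (idxMN d)) = coinVec d (idxPN d))
    (v : CoinSp d) (i : Fin (2 * (d + 1))) :
    bulkSym d (x + dirVec d i) (A v) i = A (bulkSym d x v) i := by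
  have hPN : idxPN d ≠ idxMN d := by simp [idxPN, idxMN, Fin.ext_iff]
  rw [bulkSym_apply, lastCoord_add]
  rcases lt_trichotomy (lastCoord d x) 0 with h | h | h
  · rw [if_neg]
    · simp [bulkSym, h, not_lt.mpr h.le]
    · rcases lastCoord_dirVec_cases i with ⟨-, he⟩ | ⟨rfl, he⟩ | ⟨rfl, he⟩ <;> simp [he, hPN] <;>
        omega
  · -- on `Γ` only `|−N⟩` survives, and the coin reflects it into `|+N⟩`
    have hbd : A (bulkSym d x v) = v (idxMN d) • coinVec d (idxPN d) := by
      simp [bulkSym, h, Pdir, inner_coinVec_left, hrefl h]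
    rcases lastCoord_dirVec_cases i with ⟨hi, he⟩ | ⟨rfl, he⟩ | ⟨rfl, he⟩
    · have hi' : i ≠ idxMN d ∧ i ≠ idxPN d := by
        simp only [idxMN, idxPN, ne_eq, Fin.ext_iff]
        omega
      simp [he, h, hbd, coinVec_apply, hi']
    · simp [he, h, hbd, coinVec_apply, coin_apply_idxPN hA (hrefl h)]
    · simp [he, h, hbd, coinVec_apply, hPN.symm]
  · rw [if_pos]
    · simp [bulkSym, h]
    · rcases lastCoord_dirVec_cases i with ⟨-, he⟩ | ⟨rfl, he⟩ | ⟨rfl, he⟩ <;> simp [he] <;> omega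

theorem IsQuantumWalk.bulk_comm (hU : IsQuantumWalk C U) (hC : ∀ x, adjoint (C x) * C x = 1)
    (hrefl : ∀ x, lastCoord d x = 0 → C x (coinVec d (idxMN d)) = coinVec d (idxPN d))
    {P : QWH d →L[ℂ] QWH d} (hP : ∀ ψ x, P ψ x = bulkSym d x (ψ x)) (ψ : QWH d) :
    P (U ψ) = U (P ψ) := by
  ext x i
  have := bulkSym_add_dirVec_apply (hC (x - dirVec d i)) (hrefl _) (ψ (x - dirVec d i)) i
  rw [sub_add_cancel, bulkSym_apply, ← hU] at this
  rw [hP, bulkSym_apply, this, hU, hP]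

theorem IsQuantumWalk.apply_eq_zero (hU : IsQuantumWalk C U) {ψ : QWH d} {x : Site d}
    (h : ∀ y, lastCoord d x - 1 ≤ lastCoord d y → lastCoord d y ≤ lastCoord d x + 1 → ψ y = 0) :
    U ψ x = 0 := by
  ext i
  have := lastCoord_dirVec_mem i
  rw [hU, h _ (by rw [lastCoord_sub]; omega) (by rw [lastCoord_sub]; omega), map_zero]

theorem leadVec_apply (x : Site d) (τ : Fin (2 * (d + 1))) (y : Site d) (i : Fin (2 * (d + 1))) :
    leadVec d x τ y i = if y = x ∧ i = τ then 1 else 0 := by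
  by_cases hy : y = x
  · subst hy
    simp [leadVec, coinVec_apply]
  · simp [leadVec, lp.single_apply, hy]

theorem orthonormal_leadVec :
    Orthonormal ℂ fun p : Site d × Fin (2 * (d + 1)) => leadVec d p.1 p.2 := by
  rw [orthonormal_iff_ite]
  rintro ⟨x, i⟩ ⟨x', i'⟩
  by_cases hx : x = x'
  · subst hx
    simp [leadVec, lp.inner_single_left, inner_coinVec_left, coinVec_apply]
  · simp [leadVec, lp.inner_single_left, lp.single_apply, hx]

theorem inner_leadVec_eq_zero {x x' : Site d} {τ τ' : Fin (2 * (d + 1))}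
    (h : (x, τ) ≠ (x', τ')) : inner ℂ (leadVec d x τ) (leadVec d x' τ') = 0 :=
  (orthonormal_leadVec (d := d)).inner_eq_zero (i := (x, τ)) (j := (x', τ')) h

theorem leadProj_eq_rankOne (x : Site d) (τ : Fin (2 * (d + 1))) :
    leadProj d x τ = rankOne ℂ (leadVec d x τ) (leadVec d x τ) := rfl

theorem hasSum_leadProj_outgoing {γ : ℕ → Site d} {τ : ℕ → Fin (2 * (d + 1))} {ψ a : QWH d}
    (h : HasSum (fun t : {t : ℕ // 1 ≤ t} => leadProj d (γ t) (τ t) ψ) a) :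
    HasSum (fun n => rankOne ℂ (leadVec d (γ (n + 1)) (τ (n + 1)))
      (leadVec d (γ (n + 1)) (τ (n + 1))) ψ) a :=
  (hasSum_subtype_one_le_iff (f := fun t => leadProj d (γ t) (τ t) ψ)).mp h

theorem hasSum_leadProj_incoming {γ : ℤ → Site d} {τ : ℤ → Fin (2 * (d + 1))} {ψ a : QWH d}
    (h : HasSum (fun t : {t : ℤ // t ≤ -1} => leadProj d (γ t) (τ t) ψ) a) :
    HasSum (fun n : ℕ => rankOne ℂ (leadVec d (γ (-1 - n)) (τ (-1 - n)))
      (leadVec d (γ (-1 - n)) (τ (-1 - n))) ψ) a :=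
  (hasSum_subtype_le_neg_one_iff (f := fun t => leadProj d (γ t) (τ t) ψ)).mp h

theorem IsQuantumWalk.apply_leadVec (hU : IsQuantumWalk C U) {x : Site d}
    {τ τ' : Fin (2 * (d + 1))} {c : ℂ} (hc : C x (coinVec d τ) = c • coinVec d τ') :
    U (leadVec d x τ) = c • leadVec d (x + dirVec d τ') τ' := by
  ext y i
  rw [hU, lp.coeFn_smul, Pi.smul_apply, PiLp.smul_apply, smul_eq_mul, leadVec_apply]
  by_cases hy : y - dirVec d i = x
  · subst hy
    rw [leadVec, lp.single_apply_self, hc]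
    by_cases hi : i = τ' <;> simp [hi, coinVec_apply]
  · rw [leadVec, lp.single_apply_ne _ _ _ hy, map_zero, if_neg]
    · simp
    · rintro ⟨rfl, rfl⟩
      simp at hy

theorem IsQuantumWalk.exists_apply_leadVec_eq_smul (hU : IsQuantumWalk C U) {x x' : Site d}
    {τ τ' : Fin (2 * (d + 1))} (hC : adjoint (C x) * C x = 1) (hx : x' - x = dirVec d τ')
    (hcond : ‖inner ℂ (coinVec d τ') (C x (coinVec d τ))‖ = 1) :
    ∃ c : ℂ, ‖c‖ = 1 ∧ U (leadVec d x τ) = c • leadVec d x' τ' := by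
  have hnorm (j : Fin (2 * (d + 1))) : ‖coinVec d j‖ = 1 := by simp [coinVec]
  refine ⟨_, hcond, ?_⟩
  rw [hU.apply_leadVec (eq_inner_smul_of_norm_inner_eq_one (hnorm τ') ?_ hcond), ← hx,
    add_sub_cancel]
  rw [(C x).norm_map_iff_adjoint_comp_self.mpr hC, hnorm]

theorem IsQuantumWalk.exists_apply_outgoing (hU : IsQuantumWalk C U)
    (hC : ∀ x, adjoint (C x) * C x = 1) {γ : ℕ → Site d} {τ : ℕ → Fin (2 * (d + 1))}
    (hstep : ∀ t : ℕ, 2 ≤ t → γ t - γ (t - 1) = dirVec d (τ t))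
    (hcond : ∀ t : ℕ, 1 ≤ t →
      ‖inner ℂ (coinVec d (τ (t + 1))) (C (γ t) (coinVec d (τ t)))‖ = 1) (n : ℕ) :
    ∃ c : ℂ, ‖c‖ = 1 ∧
      U (leadVec d (γ (n + 1)) (τ (n + 1))) = c • leadVec d (γ (n + 1 + 1)) (τ (n + 1 + 1)) :=
  hU.exists_apply_leadVec_eq_smul (hC _) (hstep (n + 2) (by omega)) (hcond (n + 1) (by omega))

theorem IsQuantumWalk.exists_apply_incoming (hU : IsQuantumWalk C U)
    (hC : ∀ x, adjoint (C x) * C x = 1) {γ : ℤ → Site d} {τ : ℤ → Fin (2 * (d + 1))}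
    (hstep : ∀ t : ℤ, t ≤ -1 → γ t - γ (t - 1) = dirVec d (τ t))
    (hcond : ∀ t : ℤ, t ≤ -2 →
      ‖inner ℂ (coinVec d (τ (t + 1))) (C (γ t) (coinVec d (τ t)))‖ = 1) (n : ℕ) :
    ∃ c : ℂ, ‖c‖ = 1 ∧ U (leadVec d (γ (-1 - ↑(n + 1))) (τ (-1 - ↑(n + 1)))) =
      c • leadVec d (γ (-1 - n)) (τ (-1 - n)) := by
  have hcond' := hcond (-1 - n - 1) (by omega)
  rw [sub_add_cancel] at hcond'
  rw [show -1 - ((n + 1 : ℕ) : ℤ) = -1 - n - 1 by push_cast; ring]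
  exact hU.exists_apply_leadVec_eq_smul (hC _) (hstep (-1 - n) (by omega)) hcond'

theorem isWandering_range_leadProj_outgoing {V : QWH d →L[ℂ] QWH d}
    {γ : ℕ → Site d} {τ : ℕ → Fin (2 * (d + 1))}
    (hstep : ∀ n : ℕ, ∃ c : ℂ,
      V (leadVec d (γ (n + 1)) (τ (n + 1))) = c • leadVec d (γ (n + 1 + 1)) (τ (n + 1 + 1)))
    (hadm : ∀ s t : ℕ, 1 ≤ s → 1 ≤ t → (γ s, τ s) = (γ t, τ t) → s = t) :
    IsWandering V (LinearMap.range (leadProj d (γ 1) (τ 1) : QWH d →ₗ[ℂ] QWH d)) := by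
  rw [leadProj_eq_rankOne]
  refine isWandering_range_rankOne (w := fun n => leadVec d (γ (n + 1)) (τ (n + 1))) hstep
    fun m hm => inner_leadVec_eq_zero fun h => ?_
  have := hadm (m + 1) 1 (by omega) le_rfl h
  omega

theorem isWandering_range_leadProj_incoming {V : QWH d →L[ℂ] QWH d}
    {γ : ℤ → Site d} {τ : ℤ → Fin (2 * (d + 1))}
    (hstep : ∀ n : ℕ, ∃ c : ℂ, V (leadVec d (γ (-1 - n)) (τ (-1 - n))) =
      c • leadVec d (γ (-1 - ↑(n + 1))) (τ (-1 - ↑(n + 1))))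
    (hadm : ∀ s t : ℤ, s ≤ -1 → t ≤ -1 → (γ s, τ s) = (γ t, τ t) → s = t) :
    IsWandering V (LinearMap.range (leadProj d (γ (-1)) (τ (-1)) : QWH d →ₗ[ℂ] QWH d)) := by
  have h := isWandering_range_rankOne (w := fun n : ℕ => leadVec d (γ (-1 - n)) (τ (-1 - n)))
    hstep fun m hm => inner_leadVec_eq_zero fun h => by
      have := hadm (-1 - m) (-1 - 0) (by omega) (by omega) h
      omega
  simp only [Nat.cast_zero, sub_zero] at h
  rwa [leadProj_eq_rankOne]

end Walk

theorem stmt_15_general (d : ℕ) (ni no : ℕ)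
    -- the incoming leads, defined on {…, −2, −1}, lying in Γ with tangential tangents
    (γin : Fin ni → ℤ → Site d) (τin : Fin ni → ℤ → Fin (2 * (d + 1)))
    (hstepin : ∀ j, ∀ t : ℤ, t ≤ -1 → γin j t - γin j (t - 1) = dirVec d (τin j t))
    (hadmin : ∀ j, ∀ s t : ℤ, s ≤ -1 → t ≤ -1 →
      (γin j s, τin j s) = (γin j t, τin j t) → s = t)
    -- the outgoing leads, defined on {1, 2, …}, lying in Γ with tangential tangents
    (γout : Fin no → ℕ → Site d) (τout : Fin no → ℕ → Fin (2 * (d + 1)))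
    (hstepout : ∀ k, ∀ t : ℕ, 2 ≤ t → γout k t - γout k (t - 1) = dirVec d (τout k t))
    (hadmout : ∀ k, ∀ s t : ℕ, 1 ≤ s → 1 ≤ t →
      (γout k s, τout k s) = (γout k t, τout k t) → s = t)
    -- the leads pairwise do not cross tangentially
    (hcross₁ : ∀ j j', j ≠ j' → ∀ s t : ℤ, s ≤ -1 → t ≤ -1 →
      (γin j s, τin j s) ≠ (γin j' t, τin j' t))
    (hcross₂ : ∀ k k', k ≠ k' → ∀ s t : ℕ, 1 ≤ s → 1 ≤ t →
      (γout k s, τout k s) ≠ (γout k' t, τout k' t))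
    -- the coin: unitary, reflecting on Γ, conducting along the leads
    (C : Site d → (CoinSp d →L[ℂ] CoinSp d))
    (hCunit : ∀ x, adjoint (C x) * C x = 1 ∧ C x * adjoint (C x) = 1)
    (hCrefl : ∀ x : Site d, lastCoord d x = 0 →
      C x (coinVec d (idxPN d)) = coinVec d (idxMN d) ∧
      C x (coinVec d (idxMN d)) = coinVec d (idxPN d))
    (hCin : ∀ j, ∀ t : ℤ, t ≤ -2 →
      ‖@inner ℂ _ _ (coinVec d (τin j (t + 1))) (C (γin j t) (coinVec d (τin j t)))‖ = 1)
    (hCout : ∀ k, ∀ t : ℕ, 1 ≤ t →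
      ‖@inner ℂ _ _ (coinVec d (τout k (t + 1))) (C (γout k t) (coinVec d (τout k t)))‖ = 1)
    -- the quantum walk
    (U : QWH d →L[ℂ] QWH d)
    (hUunit : adjoint U * U = 1 ∧ U * adjoint U = 1)
    (hU : ∀ (ψ : QWH d) (x : Site d) (i : Fin (2 * (d + 1))),
      (U ψ) x i = (C (x - dirVec d i) (ψ (x - dirVec d i))) i)
    -- the bulk projection ℙ and the total projections on the quantum leads
    (Pop : QWH d →L[ℂ] QWH d)
    (hPop : ∀ (ψ : QWH d) (x : Site d), (Pop ψ) x = bulkSym d x (ψ x))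
    (Pin : Fin ni → (QWH d →L[ℂ] QWH d))
    (hPin : ∀ j, ∀ ψ : QWH d,
      HasSum (fun t : {t : ℤ // t ≤ -1} => leadProj d (γin j t.1) (τin j t.1) ψ) (Pin j ψ))
    (Pout : Fin no → (QWH d →L[ℂ] QWH d))
    (hPout : ∀ k, ∀ ψ : QWH d,
      HasSum (fun t : {t : ℕ // 1 ≤ t} => leadProj d (γout k t.1) (τout k t.1) ψ) (Pout k ψ))
    -- Q = ℙ + ℙ_L and its flux
    (Q Φ : QWH d →L[ℂ] QWH d)
    (hQ : Q = Pop + (∑ j, Pin j + ∑ k, Pout k))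
    (hΦ : Φ = adjoint U * Q * U - Q) :
    (FiniteDimensional ℂ (LinearMap.ker ((Φ - 1 : QWH d →L[ℂ] QWH d) : QWH d →ₗ[ℂ] QWH d)) ∧
     FiniteDimensional ℂ (LinearMap.ker ((Φ + 1 : QWH d →L[ℂ] QWH d) : QWH d →ₗ[ℂ] QWH d)) ∧
     (Module.finrank ℂ (LinearMap.ker ((Φ - 1 : QWH d →L[ℂ] QWH d) : QWH d →ₗ[ℂ] QWH d)) : ℤ)
        - (Module.finrank ℂ (LinearMap.ker ((Φ + 1 : QWH d →L[ℂ] QWH d) : QWH d →ₗ[ℂ] QWH d)) : ℤ) = (no : ℤ) - (ni : ℤ)) ∧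
    -- U preserves the half spaces up to the boundary Γ
    (∀ ψ : QWH d, (∀ x : Site d, lastCoord d x ≤ 0 → ψ x = 0) →
      ∀ x : Site d, lastCoord d x < 0 → (U ψ) x = 0) ∧
    (∀ ψ : QWH d, (∀ x : Site d, 0 ≤ lastCoord d x → ψ x = 0) →
      ∀ x : Site d, 0 < lastCoord d x → (U ψ) x = 0) ∧
    -- Ran P_{ρ_k}(1) is wandering for U
    (∀ k, ∀ x ∈ LinearMap.range (leadProj d (γout k 1) (τout k 1) : QWH d →ₗ[ℂ] QWH d),
      ∀ y ∈ LinearMap.range (leadProj d (γout k 1) (τout k 1) : QWH d →ₗ[ℂ] QWH d),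
      ∀ m : ℕ, 1 ≤ m → @inner ℂ _ _ ((U ^ m) x) y = 0) ∧
    -- Ran P_{γ_j}(−1) is wandering for U*
    (∀ j, ∀ x ∈ LinearMap.range (leadProj d (γin j (-1)) (τin j (-1)) : QWH d →ₗ[ℂ] QWH d),
      ∀ y ∈ LinearMap.range (leadProj d (γin j (-1)) (τin j (-1)) : QWH d →ₗ[ℂ] QWH d),
      ∀ m : ℕ, 1 ≤ m → @inner ℂ _ _ (((adjoint U) ^ m) x) y = 0) := by
  have hwalk : IsQuantumWalk C U := hU
  have hC (x : Site d) : adjoint (C x) * C x = 1 := (hCunit x).1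
  have hin (j : Fin ni) := hwalk.exists_apply_incoming hC (hstepin j) (hCin j)
  have hout (k : Fin no) := hwalk.exists_apply_outgoing hC (hstepout k) (hCout k)
  have hu : Orthonormal ℂ fun k => adjoint U (leadVec d (γout k 1) (τout k 1)) :=
    (orthonormal_leadVec.comp (fun k => (γout k 1, τout k 1)) fun k k' h => by_contra fun hk =>
      hcross₂ k k' hk 1 1 le_rfl le_rfl h).adjoint_comp hUunit.2
  have hv : Orthonormal ℂ fun j => leadVec d (γin j (-1)) (τin j (-1)) :=
    orthonormal_leadVec.comp (fun j => (γin j (-1), τin j (-1))) fun j j' h =>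
      by_contra fun hj => hcross₁ j j' hj (-1) (-1) le_rfl le_rfl h
  have hflux := adjoint_mul_mul_sub_eq_of_leads hUunit.1
    (hwalk.bulk_comm hC (fun x hx => (hCrefl x hx).2) hPop) hin hout
    (fun j ψ => hasSum_leadProj_incoming (hPin j ψ))
    (fun k ψ => hasSum_leadProj_outgoing (hPout k ψ)) hQ
  simp only [Nat.cast_zero, sub_zero, zero_add] at hflux
  refine ⟨hu.index_sum_rankOne_sub_sum_rankOne hv (hΦ.trans hflux),
    fun ψ h x hx => hwalk.apply_eq_zero fun y _ hy => h y (by omega),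
    fun ψ h x hx => hwalk.apply_eq_zero fun y hy _ => h y (by omega),
    fun k => isWandering_range_leadProj_outgoing (fun n => (hout k n).imp fun _ => And.right)
      (hadmout k),
    fun j => isWandering_range_leadProj_incoming (fun n => ?_) (hadmin j)⟩
  obtain ⟨c, hc, h⟩ := hin j n
  exact ⟨_, adjoint_apply_eq_conj_smul hUunit.1 hc h⟩

/-- Consider the half spaces `ℤ^{d+1}_±` with boundary `Γ`, `n_i` admissible
incoming and `n_o` admissible outgoing leads lying in `Γ` with tangential tangents which
pairwise do not cross tangentially, the adapted projection `ℙ` which is `1` on `ℤ^{d+1}_+`,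
`0` on `ℤ^{d+1}_−` and `|−N⟩⟨−N|` on `Γ`, the total lead projection `ℙ_L`, and a coin
reflecting on `Γ` and conducting along the leads. Then for `Q = ℙ + ℙ_L` and
`Φ = U*QU − Q` one has `ind(Φ) = n_o − n_i`; moreover `U` maps vectors supported in
`ℤ^{d+1}_±` to vectors supported in `ℤ^{d+1}_± ∪ Γ`, each `Ran P_{ρ_k}(1)` is wandering for
`U`, and each `Ran P_{γ_j}(−1)` is wandering for `U*`. -/
theorem stmt_15 (d : ℕ) (ni no : ℕ)
    -- the incoming leads, defined on {…, −2, −1}, lying in Γ with tangential tangents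
    (γin : Fin ni → ℤ → Site d) (τin : Fin ni → ℤ → Fin (2 * (d + 1)))
    (hinΓ : ∀ j, ∀ t : ℤ, t ≤ -1 → lastCoord d (γin j t) = 0)
    (hinT : ∀ j, ∀ t : ℤ, t ≤ -1 → (τin j t : ℕ) < 2 * d)
    (hstepin : ∀ j, ∀ t : ℤ, t ≤ -1 → γin j t - γin j (t - 1) = dirVec d (τin j t))
    (hadmin : ∀ j, ∀ s t : ℤ, s ≤ -1 → t ≤ -1 →
      (γin j s, τin j s) = (γin j t, τin j t) → s = t)
    -- the outgoing leads, defined on {1, 2, …}, lying in Γ with tangential tangents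
    (γout : Fin no → ℕ → Site d) (τout : Fin no → ℕ → Fin (2 * (d + 1)))
    (houtΓ : ∀ k, ∀ t : ℕ, 1 ≤ t → lastCoord d (γout k t) = 0)
    (houtT : ∀ k, ∀ t : ℕ, 1 ≤ t → (τout k t : ℕ) < 2 * d)
    (hstepout : ∀ k, ∀ t : ℕ, 2 ≤ t → γout k t - γout k (t - 1) = dirVec d (τout k t))
    (hτ1 : ∀ k, τout k 1 = τout k 2)
    (hadmout : ∀ k, ∀ s t : ℕ, 1 ≤ s → 1 ≤ t →
      (γout k s, τout k s) = (γout k t, τout k t) → s = t)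
    -- the leads pairwise do not cross tangentially
    (hcross₁ : ∀ j j', j ≠ j' → ∀ s t : ℤ, s ≤ -1 → t ≤ -1 →
      (γin j s, τin j s) ≠ (γin j' t, τin j' t))
    (hcross₂ : ∀ k k', k ≠ k' → ∀ s t : ℕ, 1 ≤ s → 1 ≤ t →
      (γout k s, τout k s) ≠ (γout k' t, τout k' t))
    (hcross₃ : ∀ j k, ∀ s : ℤ, s ≤ -1 → ∀ t : ℕ, 1 ≤ t →
      (γin j s, τin j s) ≠ (γout k t, τout k t))
    -- the coin: unitary, reflecting on Γ, conducting along the leads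
    (C : Site d → (CoinSp d →L[ℂ] CoinSp d))
    (hCunit : ∀ x, adjoint (C x) * C x = 1 ∧ C x * adjoint (C x) = 1)
    (hCrefl : ∀ x : Site d, lastCoord d x = 0 →
      C x (coinVec d (idxPN d)) = coinVec d (idxMN d) ∧
      C x (coinVec d (idxMN d)) = coinVec d (idxPN d))
    (hCin : ∀ j, ∀ t : ℤ, t ≤ -2 →
      ‖@inner ℂ _ _ (coinVec d (τin j (t + 1))) (C (γin j t) (coinVec d (τin j t)))‖ = 1)
    (hCout : ∀ k, ∀ t : ℕ, 1 ≤ t →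
      ‖@inner ℂ _ _ (coinVec d (τout k (t + 1))) (C (γout k t) (coinVec d (τout k t)))‖ = 1)
    -- the quantum walk
    (U : QWH d →L[ℂ] QWH d)
    (hUunit : adjoint U * U = 1 ∧ U * adjoint U = 1)
    (hU : ∀ (ψ : QWH d) (x : Site d) (i : Fin (2 * (d + 1))),
      (U ψ) x i = (C (x - dirVec d i) (ψ (x - dirVec d i))) i)
    -- the bulk projection ℙ and the total projections on the quantum leads
    (Pop : QWH d →L[ℂ] QWH d)
    (hPop : ∀ (ψ : QWH d) (x : Site d), (Pop ψ) x = bulkSym d x (ψ x))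
    (Pin : Fin ni → (QWH d →L[ℂ] QWH d))
    (hPin : ∀ j, ∀ ψ : QWH d,
      HasSum (fun t : {t : ℤ // t ≤ -1} => leadProj d (γin j t.1) (τin j t.1) ψ) (Pin j ψ))
    (Pout : Fin no → (QWH d →L[ℂ] QWH d))
    (hPout : ∀ k, ∀ ψ : QWH d,
      HasSum (fun t : {t : ℕ // 1 ≤ t} => leadProj d (γout k t.1) (τout k t.1) ψ) (Pout k ψ))
    -- Q = ℙ + ℙ_L and its flux
    (Q Φ : QWH d →L[ℂ] QWH d)
    (hQ : Q = Pop + (∑ j, Pin j + ∑ k, Pout k))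
    (hΦ : Φ = adjoint U * Q * U - Q) :
    (FiniteDimensional ℂ (LinearMap.ker ((Φ - 1 : QWH d →L[ℂ] QWH d) : QWH d →ₗ[ℂ] QWH d)) ∧
     FiniteDimensional ℂ (LinearMap.ker ((Φ + 1 : QWH d →L[ℂ] QWH d) : QWH d →ₗ[ℂ] QWH d)) ∧
     (Module.finrank ℂ (LinearMap.ker ((Φ - 1 : QWH d →L[ℂ] QWH d) : QWH d →ₗ[ℂ] QWH d)) : ℤ)
        - (Module.finrank ℂ (LinearMap.ker ((Φ + 1 : QWH d →L[ℂ] QWH d) : QWH d →ₗ[ℂ] QWH d)) : ℤ) = (no : ℤ) - (ni : ℤ)) ∧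
    -- U preserves the half spaces up to the boundary Γ
    (∀ ψ : QWH d, (∀ x : Site d, lastCoord d x ≤ 0 → ψ x = 0) →
      ∀ x : Site d, lastCoord d x < 0 → (U ψ) x = 0) ∧
    (∀ ψ : QWH d, (∀ x : Site d, 0 ≤ lastCoord d x → ψ x = 0) →
      ∀ x : Site d, 0 < lastCoord d x → (U ψ) x = 0) ∧
    -- Ran P_{ρ_k}(1) is wandering for U
    (∀ k, ∀ x ∈ LinearMap.range (leadProj d (γout k 1) (τout k 1) : QWH d →ₗ[ℂ] QWH d),
      ∀ y ∈ LinearMap.range (leadProj d (γout k 1) (τout k 1) : QWH d →ₗ[ℂ] QWH d),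
      ∀ m : ℕ, 1 ≤ m → @inner ℂ _ _ ((U ^ m) x) y = 0) ∧
    -- Ran P_{γ_j}(−1) is wandering for U*
    (∀ j, ∀ x ∈ LinearMap.range (leadProj d (γin j (-1)) (τin j (-1)) : QWH d →ₗ[ℂ] QWH d),
      ∀ y ∈ LinearMap.range (leadProj d (γin j (-1)) (τin j (-1)) : QWH d →ₗ[ℂ] QWH d),
      ∀ m : ℕ, 1 ≤ m → @inner ℂ _ _ (((adjoint U) ^ m) x) y = 0) :=
  stmt_15_general d ni no γin τin hstepin hadmin γout τout hstepout hadmout hcross₁ hcross₂ C hCunit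
    hCrefl hCin hCout U hUunit hU Pop hPop Pin hPin Pout hPout Q Φ hQ hΦ
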